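/- (Closed formula, D_n) Let λ be a rigid D_n partition with length l, so l is even; let M = l/2, and let (α_1, …, α_M; β_1, …, β_{M+1}) be the symbol of λ in the D_n theory. Then for every 1 ≤ p ≤ M: α_{M+1−p} = #{ i : 1 ≤ i ≤ λ_1, and either (λ^T_i is odd, i is even, and (λ^T_i + 1)/2 ≥ p) or (λ^T_i is even, i is odd, and λ^T_i/2 ≥ p) }; and for every 1 ≤ p ≤ M+1: β_{M+2−p} = #{ i : 1 ≤ i ≤ λ_1, and either (λ^T_i is even, i is even, and λ^T_i/2 ≥ p) or (λ^T_i is odd, i is odd, and (λ^T_i − 1)/2 ≥ p) }. -/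

import Mathlib

/-- `svals μ` lists the numbers `s_k = l - k + μ_k` (`1 ≤ k ≤ l`, `l` the
length of `μ`), computed with 0-based indices: entry `k` is `(l - 1 - k) + μ_k`.
For weakly decreasing `μ` this list is strictly decreasing. -/
def svals (μ : List ℕ) : List ℕ :=
  μ.mapIdx (fun k a => (μ.length - 1 - k) + a)

/-- The odd values `2f_1+1 < … < 2f_M+1` of `svals μ`, in increasing order. -/
def oddVals (μ : List ℕ) : List ℕ :=
  ((svals μ).filter (fun x => decide (x % 2 = 1))).reverse

/-- The even values `2g_1 < … < 2g_{M'}` of `svals μ`, in increasing order. -/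
def evenVals (μ : List ℕ) : List ℕ :=
  ((svals μ).filter (fun x => decide (x % 2 = 0))).reverse

/-- The top row of the symbol of `μ`: `α_i = f_i - i + 1` where
`2f_i + 1` is the `i`-th smallest odd value of `svals μ` (0-based entry `i`
is `α_{i+1} = f_{i+1} - i`). -/
def topRow (μ : List ℕ) : List ℕ :=
  (oddVals μ).mapIdx (fun i v => (v - 1) / 2 - i)

/-- The bottom row of the symbol of `μ`: `β_i = g_i - i + 1` where `2g_i` is
the `i`-th smallest even value of `svals μ`. -/
def botRow (μ : List ℕ) : List ℕ :=
  (evenVals μ).mapIdx (fun i v => v / 2 - i)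

/-- The row `λ^T_i` of the transposed Young diagram: the number of parts
of `lam` that are `≥ i`. -/
def transposeRow (lam : List ℕ) (i : ℕ) : ℕ :=
  lam.countP (fun a => decide (i ≤ a))

/-!
The numbers `s_k` of `lam ++ [0]` are its β-numbers `λ_j + l - j` (`0 ≤ j ≤ l`), and these
are complementary in `[0, l + λ_1]` to the co-β-numbers `l + i - λ^T_i` (`1 ≤ i ≤ λ_1`).
If `v` is the `k`-th smallest β-number of parity `r` (from `0`), the numbers of parity `r` below
`v` are the `k` smaller such β-numbers together with the co-β-numbers of parity `r` below `v`,
so the symbol entry `(v - r) / 2 - k` counts the latter. A co-β-number `l + i - λ^T_i` lies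
below `v` iff at least `length - k` β-numbers of parity `r` lie above it. The β-numbers above
it are those with `j < λ^T_i`; since `l` is even and every even part has even multiplicity,
exactly `(λ^T_i + r) / 2` of them have parity `r`.
-/

namespace DnSymbol

open Finset

lemma count_congr {p q : ℕ → Prop} [DecidablePred p] [DecidablePred q] {n : ℕ}
    (h : ∀ k < n, p k ↔ q k) : Nat.count p n = Nat.count q n := by
  simp only [Nat.count_eq_card_filter_range]
  exact congrArg _ (filter_congr fun k hk => h k (mem_range.mp hk))

lemma count_add_mod_two {r : ℕ} (hr : r < 2) (c m : ℕ) :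
    Nat.count (fun k => (c + k) % 2 = r) m = (m + (c + r + 1) % 2) / 2 := by
  induction m with
  | zero => simp
  | succ m ih => rw [Nat.count_succ, ih]; split_ifs <;> omega

section StrictlyIncreasing

variable {α : Type*} [LinearOrder α]

lemma countP_lt_getElem {xs : List α} (h : xs.Pairwise (· < ·)) {k : ℕ}
    (hk : k < xs.length) : xs.countP (· < xs[k]) = k := by
  induction xs generalizing k with
  | nil => simp at hk
  | cons a tl ih =>
    obtain ⟨ha, htl⟩ := List.pairwise_cons.mp h
    cases k with
    | zero =>
      simpa [List.countP_eq_zero] using fun x hx => (ha x hx).le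
    | succ k =>
      simp [ha _ (List.getElem_mem _), ih htl]

lemma lt_getElem_iff {xs : List α} (h : xs.Pairwise (· < ·)) {k : ℕ}
    (hk : k < xs.length) (y : α) : y < xs[k] ↔ xs.length - k ≤ xs.countP (y < ·) := by
  induction xs generalizing k with
  | nil => simp at hk
  | cons a tl ih =>
    obtain ⟨ha, htl⟩ := List.pairwise_cons.mp h
    by_cases hya : y < a
    · have hall : (a :: tl).countP (y < ·) = tl.length + 1 := by
        rw [List.countP_eq_length.mpr fun x hx => ?_, List.length_cons]
        rcases List.mem_cons.mp hx with rfl | hx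
        · simpa using hya
        · simpa using hya.trans (ha x hx)
      have hak : a ≤ (a :: tl)[k] := by
        cases k with
        | zero => exact le_rfl
        | succ k => exact (ha _ (List.getElem_mem _)).le
      simp only [hall, List.length_cons]
      exact iff_of_true (hya.trans_le hak) (by omega)
    · cases k with
      | zero =>
        have := List.countP_le_length (p := fun x => decide (y < x)) (l := tl)
        rw [List.countP_cons_of_neg (by simpa using hya)]
        simp only [List.getElem_cons_zero, hya, false_iff, List.length_cons]
        omega
      | succ k =>
        simp [hya, ih htl]

end StrictlyIncreasing

section Partition

variable {lam : List ℕ}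

lemma getD_le_getD (hsort : lam.Pairwise (· ≥ ·)) {j k : ℕ} (hjk : j ≤ k) :
    lam.getD k 0 ≤ lam.getD j 0 := by
  rcases lt_or_ge k lam.length with hk | hk
  · simp only [List.getD_eq_getElem _ _ hk, List.getD_eq_getElem _ _ (hjk.trans_lt hk)]
    rcases hjk.eq_or_lt with rfl | hlt
    · rfl
    · exact List.pairwise_iff_getElem.mp hsort j k _ hk hlt
  · simp only [List.getD_eq_default _ _ hk, zero_le]

lemma lt_transposeRow_iff (hsort : lam.Pairwise (· ≥ ·)) (v j : ℕ) :
    j < transposeRow lam v ↔ j < lam.length ∧ v ≤ lam.getD j 0 := by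
  induction lam generalizing j with
  | nil => simp [transposeRow]
  | cons a tl ih =>
    obtain ⟨ha, htl⟩ := List.pairwise_cons.mp hsort
    by_cases hva : v ≤ a
    · cases j with
      | zero => simp [transposeRow, hva]
      | succ j => simpa [transposeRow, hva] using ih htl j
    · have hzero : transposeRow (a :: tl) v = 0 := by
        simpa [transposeRow, List.countP_eq_zero, hva] using
          fun x hx => (ha x hx).trans_lt (not_le.mp hva)
      have hle : (a :: tl).getD j 0 ≤ a := getD_le_getD hsort (Nat.zero_le j)
      simp only [hzero, Nat.not_lt_zero, false_iff, not_and]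
      omega

lemma transposeRow_le_length (lam : List ℕ) (v : ℕ) : transposeRow lam v ≤ lam.length :=
  List.countP_le_length

lemma transposeRow_eq_add_count (lam : List ℕ) (v : ℕ) :
    transposeRow lam v = transposeRow lam (v + 1) + lam.count v := by
  induction lam with
  | nil => simp [transposeRow]
  | cons a tl ih =>
    simp only [transposeRow, List.countP_cons, List.count_cons, beq_iff_eq,
      decide_eq_true_eq] at ih ⊢
    split_ifs <;> omega

lemma getD_eq_of_transposeRow_le (hsort : lam.Pairwise (· ≥ ·)) {v j : ℕ}
    (hj₁ : transposeRow lam (v + 1) ≤ j) (hj₂ : j < transposeRow lam v) :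
    lam.getD j 0 = v := by
  have h₁ := (lt_transposeRow_iff hsort v j).mp hj₂
  have h₂ := (lt_transposeRow_iff hsort (v + 1) j).not.mp (by omega)
  omega

lemma transposeRow_one (hpos : ∀ x ∈ lam, 0 < x) : transposeRow lam 1 = lam.length :=
  List.countP_eq_length.mpr fun x hx => decide_eq_true (hpos x hx)

lemma even_length (hDn : ∀ m : ℕ, Even m → Even (lam.count m)) (hsum : Even lam.sum) :
    Even lam.length := by
  have hcast : (lam.length : ZMod 2) = lam.sum := by
    rw [← List.sum_toFinset_count_eq_length, Finset.sum_list_count]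
    simp only [Nat.cast_sum, smul_eq_mul, Nat.cast_mul]
    refine Finset.sum_congr rfl fun v _ => ?_
    rcases Nat.even_or_odd v with hv | hv
    · simp [ZMod.natCast_eq_zero_iff_even.mpr (hDn v hv)]
    · simp [ZMod.natCast_eq_one_iff_odd.mpr hv]
  rw [← ZMod.natCast_eq_zero_iff_even, hcast, ZMod.natCast_eq_zero_iff_even]
  exact hsum

lemma count_parity_transposeRow (hsort : lam.Pairwise (· ≥ ·))
    (hDn : ∀ m : ℕ, Even m → Even (lam.count m)) {r : ℕ} (hr : r < 2) (v : ℕ) :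
    Nat.count (fun j => (lam.getD j 0 + j) % 2 = r) (transposeRow lam v) =
      (transposeRow lam v + r) / 2 := by
  set N := v + lam.sum + 1
  have hbase : transposeRow lam N = 0 := by
    refine List.countP_eq_zero.mpr fun x hx => ?_
    have := List.le_sum_of_mem hx
    simp only [decide_eq_true_eq, N]
    omega
  induction (by omega : v ≤ N) using Nat.decreasingInduction with
  | self => rw [hbase, Nat.count_zero]; omega
  | of_succ w _ ih =>
    -- positions `[λ^T_{w+1}, λ^T_w)` hold the parts equal to `w`, evenly many when `w` is even
    have hsplit := transposeRow_eq_add_count lam w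
    set a := transposeRow lam (w + 1)
    have hblock : Nat.count (fun k => (lam.getD (a + k) 0 + (a + k)) % 2 = r) (lam.count w) =
        Nat.count (fun k => (w + a + k) % 2 = r) (lam.count w) :=
      count_congr fun k hk => by
        rw [getD_eq_of_transposeRow_le (v := w) hsort (by omega) (by omega), Nat.add_assoc]
    rw [hsplit, Nat.count_add, ih, hblock, count_add_mod_two hr]
    rcases Nat.even_or_odd w with hw | hw
    · have := hDn w hw
      rw [Nat.even_iff] at hw this
      omega
    · rw [Nat.odd_iff] at hw
      omega

end Partition

section BetaNumbers

variable {lam : List ℕ}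

/-- `betaNumber lam j` is the `j`-th entry of `svals (lam ++ [0])` (see `svals_append_zero`).
By Macdonald, *Symmetric functions and Hall polynomials*, I (1.7), the β-numbers
(`0 ≤ j ≤ l`) and the co-β-numbers (`1 ≤ i ≤ λ_1`) partition `[0, l + λ_1]`. -/
def betaNumber (lam : List ℕ) (j : ℕ) : ℕ := (lam.length - j) + lam.getD j 0

def coBetaNumber (lam : List ℕ) (i : ℕ) : ℕ := lam.length + i - transposeRow lam i

def betaSet (lam : List ℕ) : Finset ℕ := (range (lam.length + 1)).image (betaNumber lam)

def coBetaSet (lam : List ℕ) : Finset ℕ := (Icc 1 (lam.getD 0 0)).image (coBetaNumber lam)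

lemma betaNumber_strictAntiOn (hsort : lam.Pairwise (· ≥ ·)) :
    StrictAntiOn (betaNumber lam) (Set.Iic lam.length) := by
  intro j _ k hk hjk
  have := getD_le_getD hsort hjk.le
  simp only [Set.mem_Iic] at hk
  simp only [betaNumber]
  omega

lemma coBetaNumber_strictMono (lam : List ℕ) : StrictMono (coBetaNumber lam) := by
  intro i i' hii'
  have hanti : transposeRow lam i' ≤ transposeRow lam i :=
    List.countP_mono_left fun x _ hx => by simp only [decide_eq_true_eq] at hx ⊢; omega
  have := transposeRow_le_length lam i
  simp only [coBetaNumber]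
  omega

lemma coBetaNumber_lt_betaNumber (hsort : lam.Pairwise (· ≥ ·)) {i j : ℕ}
    (hj : j < transposeRow lam i) : coBetaNumber lam i < betaNumber lam j := by
  have := (lt_transposeRow_iff hsort i j).mp hj
  have := transposeRow_le_length lam i
  simp only [betaNumber, coBetaNumber]
  omega

lemma betaNumber_lt_coBetaNumber (hsort : lam.Pairwise (· ≥ ·)) {i j : ℕ} (hi : 1 ≤ i)
    (hj : transposeRow lam i ≤ j) (hjl : j ≤ lam.length) :
    betaNumber lam j < coBetaNumber lam i := by
  have hlt : lam.getD j 0 < i := by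
    rcases lt_or_ge j lam.length with hj' | hj'
    · exact not_le.mp fun h => absurd ((lt_transposeRow_iff hsort i j).mpr ⟨hj', h⟩) (by omega)
    · rw [List.getD_eq_default _ _ hj']; omega
  simp only [betaNumber, coBetaNumber]
  omega

lemma card_betaSet (hsort : lam.Pairwise (· ≥ ·)) : #(betaSet lam) = lam.length + 1 := by
  rw [betaSet, card_image_of_injOn, card_range]
  exact (betaNumber_strictAntiOn hsort).injOn.mono fun j hj => by
    simpa [Nat.lt_succ_iff] using hj

lemma card_coBetaSet (lam : List ℕ) : #(coBetaSet lam) = lam.getD 0 0 := by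
  rw [coBetaSet, card_image_of_injective _ (coBetaNumber_strictMono lam).injective,
    Nat.card_Icc, Nat.add_sub_cancel]

lemma disjoint_betaSet_coBetaSet (hsort : lam.Pairwise (· ≥ ·)) :
    Disjoint (betaSet lam) (coBetaSet lam) := by
  simp only [betaSet, coBetaSet, disjoint_left, mem_image, mem_range, mem_Icc, not_exists,
    not_and, forall_exists_index, and_imp]
  rintro _ j hj rfl i hi _ heq
  rcases lt_or_ge j (transposeRow lam i) with hji | hji
  · exact (coBetaNumber_lt_betaNumber hsort hji).ne heq
  · exact (betaNumber_lt_coBetaNumber hsort hi hji (by omega)).ne' heq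

lemma betaSet_union_coBetaSet (hsort : lam.Pairwise (· ≥ ·)) :
    betaSet lam ∪ coBetaSet lam = range (lam.length + lam.getD 0 0 + 1) := by
  refine eq_of_subset_of_card_le (union_subset ?_ ?_) ?_
  · simp only [betaSet, image_subset_iff, mem_range, betaNumber]
    intro j _
    have := getD_le_getD hsort (Nat.zero_le j)
    omega
  · simp only [coBetaSet, image_subset_iff, mem_Icc, mem_range, coBetaNumber]
    intro i _
    omega
  · rw [card_union_of_disjoint (disjoint_betaSet_coBetaSet hsort), card_betaSet hsort,
      card_coBetaSet, card_range]
    omega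

lemma filter_coBetaNumber_lt_betaSet (hsort : lam.Pairwise (· ≥ ·)) {i : ℕ} (hi : 1 ≤ i) :
    (betaSet lam).filter (coBetaNumber lam i < ·) =
      (range (transposeRow lam i)).image (betaNumber lam) := by
  have := transposeRow_le_length lam i
  ext x
  simp only [betaSet, mem_filter, mem_image, mem_range]
  constructor
  · rintro ⟨⟨j, hj, rfl⟩, hlt⟩
    refine ⟨j, not_le.mp fun hji => ?_, rfl⟩
    exact (betaNumber_lt_coBetaNumber hsort hi hji (by omega)).not_gt hlt
  · rintro ⟨j, hj, rfl⟩
    exact ⟨⟨j, by omega, rfl⟩, coBetaNumber_lt_betaNumber hsort hj⟩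

end BetaNumbers

section ParityVals

variable {lam : List ℕ}

def parityVals (lam : List ℕ) (r : ℕ) : List ℕ :=
  ((svals (lam ++ [0])).filter (fun x => decide (x % 2 = r))).reverse

lemma svals_append_zero (lam : List ℕ) :
    svals (lam ++ [0]) = (List.range (lam.length + 1)).map (betaNumber lam) := by
  refine List.ext_getElem (by simp [svals]) fun k hk _ => ?_
  have hk' : k < lam.length + 1 := by simpa [svals] using hk
  have hget : (lam ++ [0])[k]'(by simpa using hk') = lam.getD k 0 := by
    rcases lt_or_eq_of_le (Nat.lt_succ_iff.mp hk') with hkl | rfl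
    · rw [List.getElem_append_left hkl, List.getD_eq_getElem _ _ hkl]
    · simp
  simp only [svals, List.getElem_mapIdx, List.getElem_map, List.getElem_range, hget,
    betaNumber, List.length_append, List.length_singleton]
  omega

lemma parityVals_pairwise (hsort : lam.Pairwise (· ≥ ·)) (r : ℕ) :
    (parityVals lam r).Pairwise (· < ·) := by
  rw [parityVals, List.pairwise_reverse, svals_append_zero]
  refine List.Pairwise.filter _ (List.pairwise_map.mpr ?_)
  refine List.pairwise_lt_range.imp_of_mem fun hj hk hjk => ?_
  simp only [List.mem_range, Nat.lt_succ_iff] at hj hk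
  exact betaNumber_strictAntiOn hsort hj hk hjk

lemma toFinset_parityVals (lam : List ℕ) (r : ℕ) :
    (parityVals lam r).toFinset = (betaSet lam).filter (· % 2 = r) := by
  ext x
  simp [parityVals, betaSet, svals_append_zero]

lemma countP_parityVals (hsort : lam.Pairwise (· ≥ ·)) (r : ℕ) (q : ℕ → Prop)
    [DecidablePred q] :
    (parityVals lam r).countP (fun x => decide (q x)) =
      #((betaSet lam).filter fun x => x % 2 = r ∧ q x) := by
  rw [List.countP_eq_length_filter,
    ← List.toFinset_card_of_nodup ((parityVals_pairwise hsort r).nodup.filter _),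
    List.toFinset_filter, toFinset_parityVals, filter_filter]
  simp only [decide_eq_true_eq]

lemma length_parityVals (hsort : lam.Pairwise (· ≥ ·)) (r : ℕ) :
    (parityVals lam r).length = #((betaSet lam).filter (· % 2 = r)) := by
  rw [← toFinset_parityVals, List.toFinset_card_of_nodup (parityVals_pairwise hsort r).nodup]

lemma card_filter_image_betaNumber (hsort : lam.Pairwise (· ≥ ·)) (P : ℕ → Prop)
    [DecidablePred P] {t : ℕ} (ht : t ≤ lam.length + 1) :
    #(((range t).image (betaNumber lam)).filter P) =
      Nat.count (fun j => P (betaNumber lam j)) t := by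
  rw [filter_image, card_image_of_injOn, Nat.count_eq_card_filter_range]
  exact (betaNumber_strictAntiOn hsort).injOn.mono fun j hj => by
    simp only [coe_filter, mem_range, Set.mem_ofPred_eq] at hj
    exact Set.mem_Iic.mpr (by omega)

lemma count_betaNumber_mod_two (hl : Even lam.length) (r : ℕ) {t : ℕ} (ht : t ≤ lam.length) :
    Nat.count (fun j => betaNumber lam j % 2 = r) t =
      Nat.count (fun j => (lam.getD j 0 + j) % 2 = r) t := by
  have hl2 : lam.length % 2 = 0 := Nat.even_iff.mp hl
  exact count_congr fun j hj => by simp only [betaNumber]; omega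

lemma card_filter_betaSet_mod_two (hsort : lam.Pairwise (· ≥ ·)) (hpos : ∀ x ∈ lam, 0 < x)
    (hDn : ∀ m : ℕ, Even m → Even (lam.count m)) (hl : Even lam.length) {r : ℕ} (hr : r < 2) :
    #((betaSet lam).filter (· % 2 = r)) = (lam.length + r) / 2 + 1 - r := by
  have hcount := count_parity_transposeRow hsort hDn hr 1
  rw [transposeRow_one hpos] at hcount
  have hlast : betaNumber lam lam.length = 0 := by simp [betaNumber]
  rw [betaSet, card_filter_image_betaNumber hsort _ le_rfl, Nat.count_succ,
    count_betaNumber_mod_two hl r le_rfl, hcount, hlast]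
  split_ifs <;> omega

lemma card_filter_betaSet_gt_coBetaNumber (hsort : lam.Pairwise (· ≥ ·))
    (hDn : ∀ m : ℕ, Even m → Even (lam.count m)) (hl : Even lam.length) {r i : ℕ}
    (hr : r < 2) (hi : 1 ≤ i) :
    #((betaSet lam).filter fun x => x % 2 = r ∧ coBetaNumber lam i < x) =
      (transposeRow lam i + r) / 2 := by
  have ht := transposeRow_le_length lam i
  rw [← filter_filter, filter_comm, filter_coBetaNumber_lt_betaSet hsort hi,
    card_filter_image_betaNumber hsort _ (by omega), count_betaNumber_mod_two hl r ht,
    count_parity_transposeRow hsort hDn hr]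

lemma getElem_parityVals_mem {r k : ℕ} (hk : k < (parityVals lam r).length) :
    (parityVals lam r)[k] ∈ betaSet lam ∧ (parityVals lam r)[k] % 2 = r := by
  simpa using (toFinset_parityVals lam r ▸ List.mem_toFinset.mpr (List.getElem_mem hk) :
    (parityVals lam r)[k] ∈ (betaSet lam).filter (· % 2 = r))

lemma getElem_parityVals_div_two_sub (hsort : lam.Pairwise (· ≥ ·)) {r k : ℕ} (hr : r < 2)
    (hk : k < (parityVals lam r).length) :
    ((parityVals lam r)[k] - r) / 2 - k =
      #((Icc 1 (lam.getD 0 0)).filter fun i =>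
        coBetaNumber lam i % 2 = r ∧ coBetaNumber lam i < (parityVals lam r)[k]) := by
  set v := (parityVals lam r)[k]
  obtain ⟨hvβ, hvr⟩ := getElem_parityVals_mem hk
  have hv : v < lam.length + lam.getD 0 0 + 1 := by
    simpa [betaSet_union_coBetaSet hsort] using mem_union_left (coBetaSet lam) hvβ
  have hbelow : #((betaSet lam).filter fun x => x % 2 = r ∧ x < v) = k := by
    rw [← countP_parityVals hsort r (· < v), countP_lt_getElem (parityVals_pairwise hsort r) hk]
  have htotal : #((range (lam.length + lam.getD 0 0 + 1)).filter fun x => x % 2 = r ∧ x < v) =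
      Nat.count (fun x => (0 + x) % 2 = r) v := by
    rw [Nat.count_eq_card_filter_range]
    congr 1
    ext x
    simp only [mem_filter, mem_range, zero_add]
    omega
  have hco : #((coBetaSet lam).filter fun x => x % 2 = r ∧ x < v) =
      #((Icc 1 (lam.getD 0 0)).filter fun i =>
        coBetaNumber lam i % 2 = r ∧ coBetaNumber lam i < v) := by
    rw [coBetaSet, filter_image, card_image_of_injective _ (coBetaNumber_strictMono lam).injective]
  rw [← betaSet_union_coBetaSet hsort, filter_union,
    card_union_of_disjoint (disjoint_filter_filter (disjoint_betaSet_coBetaSet hsort)),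
    hbelow, hco, count_add_mod_two hr] at htotal
  omega

lemma getD_mapIdx_parityVals (hsort : lam.Pairwise (· ≥ ·))
    (hDn : ∀ m : ℕ, Even m → Even (lam.count m)) (hl : Even lam.length) {r k : ℕ} (hr : r < 2)
    (hk : k < (parityVals lam r).length) :
    ((parityVals lam r).mapIdx fun i v => (v - r) / 2 - i).getD k 0 =
      #((Icc 1 (lam.getD 0 0)).filter fun i => coBetaNumber lam i % 2 = r ∧
        (parityVals lam r).length - k ≤ (transposeRow lam i + r) / 2) := by
  rw [List.getD_eq_getElem _ _ (by simpa using hk), List.getElem_mapIdx,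
    getElem_parityVals_div_two_sub hsort hr hk]
  refine congrArg _ (filter_congr fun i hi => ?_)
  rw [lt_getElem_iff (parityVals_pairwise hsort r) hk, countP_parityVals hsort r,
    card_filter_betaSet_gt_coBetaNumber hsort hDn hl hr (mem_Icc.mp hi).1]

lemma topRow_append_zero (lam : List ℕ) :
    topRow (lam ++ [0]) = (parityVals lam 1).mapIdx fun i v => (v - 1) / 2 - i := rfl

lemma botRow_append_zero (lam : List ℕ) :
    botRow (lam ++ [0]) = (parityVals lam 0).mapIdx fun i v => (v - 0) / 2 - i := rfl

end ParityVals

end DnSymbol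

open DnSymbol in
theorem closed_formula_Dn_general (n : ℕ) (lam : List ℕ) (M : ℕ)
    (hsort : lam.Pairwise (· ≥ ·))
    (hpos : ∀ x ∈ lam, 0 < x)
    (hsum : lam.sum = 2 * n)
    (hDn : ∀ m : ℕ, Even m → Even (lam.count m))
    (hM : M = lam.length / 2) :
    (∀ p : ℕ, 1 ≤ p → p ≤ M →
      (topRow (lam ++ [0])).getD (M - p) 0 =
        ((Finset.Icc 1 (lam.getD 0 0)).filter (fun i =>
          ((transposeRow lam i) % 2 = 1 ∧ i % 2 = 0 ∧
            p ≤ ((transposeRow lam i) + 1) / 2) ∨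
          ((transposeRow lam i) % 2 = 0 ∧ i % 2 = 1 ∧
            p ≤ (transposeRow lam i) / 2))).card) ∧
    (∀ p : ℕ, 1 ≤ p → p ≤ M + 1 →
      (botRow (lam ++ [0])).getD (M + 1 - p) 0 =
        ((Finset.Icc 1 (lam.getD 0 0)).filter (fun i =>
          ((transposeRow lam i) % 2 = 0 ∧ i % 2 = 0 ∧
            p ≤ (transposeRow lam i) / 2) ∨
          ((transposeRow lam i) % 2 = 1 ∧ i % 2 = 1 ∧
            p ≤ ((transposeRow lam i) - 1) / 2))).card) := by
  have hl : Even lam.length := even_length hDn ⟨n, by omega⟩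
  have hlen {r : ℕ} (hr : r < 2) : (parityVals lam r).length = (lam.length + r) / 2 + 1 - r := by
    rw [length_parityVals hsort, card_filter_betaSet_mod_two hsort hpos hDn hl hr]
  have hl2 : lam.length % 2 = 0 := Nat.even_iff.mp hl
  refine ⟨fun p hp hpM => ?_, fun p hp hpM => ?_⟩
  · rw [topRow_append_zero, getD_mapIdx_parityVals hsort hDn hl one_lt_two
      (by rw [hlen one_lt_two]; omega), hlen one_lt_two]
    refine congrArg _ (Finset.filter_congr fun i _ => ?_)
    have := transposeRow_le_length lam i
    simp only [coBetaNumber]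
    omega
  · rw [botRow_append_zero, getD_mapIdx_parityVals hsort hDn hl two_pos
      (by rw [hlen two_pos]; omega), hlen two_pos]
    refine congrArg _ (Finset.filter_congr fun i _ => ?_)
    have := transposeRow_le_length lam i
    simp only [coBetaNumber]
    omega

/-- **Closed formula for the symbol, `D_n` theory.**  For a rigid `D_n`
partition `lam` of `2n` with (even) length `l` and `M = l/2`, the symbol
`(α_1, …, α_M; β_1, …, β_{M+1})` of `lam` in the `D_n` theory (computed from
`lam ++ [0]`) satisfies, for `1 ≤ p ≤ M`: `α_{M+1-p}` equals the number of
`1 ≤ i ≤ λ_1` for which either (`λ^T_i` odd, `i` even, `(λ^T_i+1)/2 ≥ p`) or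
(`λ^T_i` even, `i` odd, `λ^T_i/2 ≥ p`); and for `1 ≤ p ≤ M+1`: `β_{M+2-p}`
equals the number of `1 ≤ i ≤ λ_1` for which either (`λ^T_i` even, `i` even,
`λ^T_i/2 ≥ p`) or (`λ^T_i` odd, `i` odd, `(λ^T_i-1)/2 ≥ p`). -/
theorem closed_formula_Dn (n : ℕ) (hn : 0 < n) (lam : List ℕ) (M : ℕ)
    (hsort : lam.Pairwise (· ≥ ·))
    (hpos : ∀ x ∈ lam, 0 < x)
    (hsum : lam.sum = 2 * n)
    (hDn : ∀ m : ℕ, Even m → Even (lam.count m))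
    (hgap : ∀ i : ℕ, i + 1 < lam.length → lam.getD i 0 ≤ lam.getD (i + 1) 0 + 1)
    (hrig : ∀ m : ℕ, Odd m → lam.count m ≠ 2)
    (hM : M = lam.length / 2) :
    (∀ p : ℕ, 1 ≤ p → p ≤ M →
      (topRow (lam ++ [0])).getD (M - p) 0 =
        ((Finset.Icc 1 (lam.getD 0 0)).filter (fun i =>
          ((transposeRow lam i) % 2 = 1 ∧ i % 2 = 0 ∧
            p ≤ ((transposeRow lam i) + 1) / 2) ∨
          ((transposeRow lam i) % 2 = 0 ∧ i % 2 = 1 ∧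
            p ≤ (transposeRow lam i) / 2))).card) ∧
    (∀ p : ℕ, 1 ≤ p → p ≤ M + 1 →
      (botRow (lam ++ [0])).getD (M + 1 - p) 0 =
        ((Finset.Icc 1 (lam.getD 0 0)).filter (fun i =>
          ((transposeRow lam i) % 2 = 0 ∧ i % 2 = 0 ∧
            p ≤ (transposeRow lam i) / 2) ∨
          ((transposeRow lam i) % 2 = 1 ∧ i % 2 = 1 ∧
            p ≤ ((transposeRow lam i) - 1) / 2))).card) :=
  closed_formula_Dn_general n lam M hsort hpos hsum hDn hM
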